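/- arXiv:1502.05834 — 3 statements merged into one kernel-verified Lean document; each statement's English description precedes it below -/
import Mathlib

section
/- Let F = (W,R0,R1) be any 2-frame such that R0 is weakly connected, R1 is pseudo-transitive, and R0, R1 left-commute (i.e., (lcom) holds). If the formula ψ∞ is satisfiable in F (i.e., ψ∞ holds at some point of some model based on F), then W is infinite. -/
set_option linter.unusedVariables false

/-! ### Unimodal syntax -/

/-- Unimodal formulas: propositional variables, falsum, implication and one box.
Other Booleans and the diamond are defined from these. -/
inductive UForm : Type
  | var : ℕ → UForm
  | bot : UForm
  | imp : UForm → UForm → UForm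
  | box : UForm → UForm

namespace UForm
def neg (φ : UForm) : UForm := imp φ bot
def dia (φ : UForm) : UForm := neg (box (neg φ))
end UForm

/-! ### Bimodal syntax -/

/-- Bimodal formulas: propositional variables, falsum, implication and boxes `□0`, `□1`. -/
inductive BForm : Type
  | var : ℕ → BForm
  | bot : BForm
  | imp : BForm → BForm → BForm
  | box : Fin 2 → BForm → BForm

namespace BForm
def neg (φ : BForm) : BForm := imp φ bot
def top : BForm := neg bot
def and (φ ψ : BForm) : BForm := neg (imp φ (neg ψ))
def or (φ ψ : BForm) : BForm := imp (neg φ) ψ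
def dia (i : Fin 2) (φ : BForm) : BForm := neg (box i (neg φ))

/-- Substitution of formulas for propositional variables. -/
def subst (s : ℕ → BForm) : BForm → BForm
  | var n => s n
  | bot => bot
  | imp φ ψ => imp (subst s φ) (subst s ψ)
  | box i φ => box i (subst s φ)
end BForm

/-- Embedding of unimodal formulas into bimodal ones, reading the unimodal box as `□i`. -/
def UForm.embed (i : Fin 2) : UForm → BForm
  | var n => .var n
  | bot => .bot
  | imp φ ψ => .imp (embed i φ) (embed i ψ)
  | box φ => .box i (embed i φ)

/-! ### Frames and semantics -/

/-- A unimodal Kripke frame: a nonempty set with a binary relation. -/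
structure Frame1 : Type 1 where
  W : Type
  ne : Nonempty W
  R : W → W → Prop

/-- Truth of a unimodal formula at a point of a model based on a unimodal frame. -/
def UTruth (F : Frame1) (V : ℕ → F.W → Prop) : F.W → UForm → Prop
  | w, .var n => V n w
  | _, .bot => False
  | w, .imp φ ψ => UTruth F V w φ → UTruth F V w ψ
  | w, .box φ => ∀ v, F.R w v → UTruth F V v φ

/-- Validity of a unimodal formula in a unimodal frame. -/
def UValid (F : Frame1) (φ : UForm) : Prop := ∀ V w, UTruth F V w φ

/-- `F` is a frame for the set `L` of unimodal formulas. -/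
def UFrameFor (F : Frame1) (L : Set UForm) : Prop := ∀ φ ∈ L, UValid F φ

/-- The unimodal logic determined by a class of unimodal frames. -/
def ULog (C : Set Frame1) : Set UForm := { φ | ∀ F ∈ C, UValid F φ }

/-- The unimodal logic of a single unimodal frame. -/
def LogOf (F : Frame1) : Set UForm := { φ | UValid F φ }

/-- A 2-frame: a nonempty set with two binary relations `R 0` and `R 1`. -/
structure Frame2 : Type 1 where
  W : Type
  ne : Nonempty W
  R : Fin 2 → W → W → Prop

/-- Truth of a bimodal formula at a point of a model based on a 2-frame. -/
def BTruth (F : Frame2) (V : ℕ → F.W → Prop) : F.W → BForm → Prop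
  | w, .var n => V n w
  | _, .bot => False
  | w, .imp φ ψ => BTruth F V w φ → BTruth F V w ψ
  | w, .box i φ => ∀ v, F.R i w v → BTruth F V v φ

/-- Validity of a bimodal formula in a 2-frame. -/
def BValid (F : Frame2) (φ : BForm) : Prop := ∀ V w, BTruth F V w φ

/-- `F` is a frame for the set `L` of bimodal formulas. -/
def FrameFor (F : Frame2) (L : Set BForm) : Prop := ∀ φ ∈ L, BValid F φ

/-! ### Normal bimodal logics -/

/-- `φ` is a propositional tautology: it is true under every assignment of truth values
to formulas that respects `⊥` and `→` (so variables and boxed formulas act as atoms). -/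
def BTaut (φ : BForm) : Prop :=
  ∀ v : BForm → Prop, (¬ v .bot) → (∀ a b, v (.imp a b) ↔ (v a → v b)) → v φ

/-- A normal bimodal logic: contains all propositional tautologies and the K-axioms for
both boxes, and is closed under modus ponens, substitution and necessitation. -/
structure IsLogic (L : Set BForm) : Prop where
  taut : ∀ φ, BTaut φ → φ ∈ L
  kax : ∀ (i : Fin 2) (φ ψ : BForm),
    BForm.imp (.box i (.imp φ ψ)) (.imp (.box i φ) (.box i ψ)) ∈ L
  mp : ∀ φ ψ, BForm.imp φ ψ ∈ L → φ ∈ L → ψ ∈ L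
  subst : ∀ φ s, φ ∈ L → BForm.subst s φ ∈ L
  nec : ∀ (i : Fin 2) (φ : BForm), φ ∈ L → BForm.box i φ ∈ L

/-- The smallest normal bimodal logic containing a given set of bimodal formulas. -/
def SmallestLogic (S : Set BForm) : Set BForm := ⋂₀ { L : Set BForm | IsLogic L ∧ S ⊆ L }

/-- The fusion `L0 ⊕ L1`: the smallest normal bimodal logic containing `L0` (in `□0`)
and `L1` (in `□1`). -/
def Fusion (L0 L1 : Set UForm) : Set BForm :=
  SmallestLogic ((UForm.embed 0 '' L0) ∪ (UForm.embed 1 '' L1))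

/-- Left commutativity axiom `□1□0 p → □0□1 p`. -/
def lcomAx : BForm := .imp (.box 1 (.box 0 (.var 0))) (.box 0 (.box 1 (.var 0)))

/-- Right commutativity axiom `□0□1 p → □1□0 p`. -/
def rcomAx : BForm := .imp (.box 0 (.box 1 (.var 0))) (.box 1 (.box 0 (.var 0)))

/-- Confluence axiom `◇0□1 p → □1◇0 p`. -/
def confAx : BForm := .imp (.dia 0 (.box 1 (.var 0))) (.box 1 (.dia 0 (.var 0)))

/-- The commutator `[L0, L1]`: the smallest normal bimodal logic containing the fusion
together with the two commutativity axioms and the confluence axiom. -/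
def Commutator (L0 L1 : Set UForm) : Set BForm :=
  SmallestLogic ((UForm.embed 0 '' L0) ∪ (UForm.embed 1 '' L1) ∪ {lcomAx, rcomAx, confAx})

/-- `[L0, L1]^lcom`: the smallest normal bimodal logic containing the fusion together
with the left commutativity axiom only. -/
def CommutatorLcom (L0 L1 : Set UForm) : Set BForm :=
  SmallestLogic ((UForm.embed 0 '' L0) ∪ (UForm.embed 1 '' L1) ∪ {lcomAx})

/-- A normal bimodal logic has the finite model property if every bimodal formula not in
`L` fails at some point of a model based on a finite frame for `L`. -/
def HasFMP (L : Set BForm) : Prop :=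
  ∀ φ, φ ∉ L → ∃ F : Frame2, Finite F.W ∧ FrameFor F L ∧ ∃ V w, ¬ BTruth F V w φ

/-! ### Products -/

/-- The product of two unimodal frames. -/
def prodFrame (F0 F1 : Frame1) : Frame2 where
  W := F0.W × F1.W
  ne := F0.ne.elim fun a => F1.ne.elim fun b => ⟨(a, b)⟩
  R := fun i a b =>
    if i = 0 then F0.R a.1 b.1 ∧ a.2 = b.2 else F1.R a.2 b.2 ∧ a.1 = b.1

/-- The product logic `L0 × L1` of two (Kripke complete) unimodal logics: the set of
bimodal formulas valid in every product of a frame for `L0` with a frame for `L1`. -/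
def ProdLogic (L0 L1 : Set UForm) : Set BForm :=
  { φ | ∀ F0 F1 : Frame1, UFrameFor F0 L0 → UFrameFor F1 L1 →
      BValid (prodFrame F0 F1) φ }

/-! ### Relation properties and particular unimodal logics -/

/-- Weak connectedness. -/
def WeaklyConnected {W : Type*} (R : W → W → Prop) : Prop :=
  ∀ x y z, R x y → R x z → y = z ∨ R y z ∨ R z y

/-- Pseudo-transitivity. -/
def PseudoTransitive {W : Type*} (R : W → W → Prop) : Prop :=
  ∀ x y z, R x y → R y z → x = z ∨ R x z

/-- `K`: the unimodal logic determined by all frames. -/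
def LogicK : Set UForm := ULog Set.univ

/-- `K3`: the unimodal logic determined by all weakly connected frames. -/
def LogicK3 : Set UForm := ULog { F | WeaklyConnected F.R }

/-- `K4.3`: the unimodal logic determined by all transitive weakly connected frames. -/
def LogicK43 : Set UForm := ULog { F | Transitive F.R ∧ WeaklyConnected F.R }

/-- `S4.3`: the logic determined by all reflexive transitive weakly connected frames. -/
def LogicS43 : Set UForm :=
  ULog { F | Reflexive F.R ∧ Transitive F.R ∧ WeaklyConnected F.R }

/-- `S5`: the unimodal logic determined by all equivalence frames. -/
def LogicS5 : Set UForm := ULog { F | Equivalence F.R }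

/-- `Diff`: the unimodal logic determined by all difference frames `(W, ≠)`. -/
def LogicDiff : Set UForm := ULog { F | ∀ a b, F.R a b ↔ a ≠ b }

/-- `K4⁻`: the unimodal logic determined by all pseudo-transitive frames. -/
def LogicK4minus : Set UForm := ULog { F | PseudoTransitive F.R }

/-- The frame `(ω + 1, >)` on `{0, 1, 2, …, ω}`. -/
def omegaSuccGt : Frame1 := ⟨WithTop ℕ, ⟨⊤⟩, fun a b => b < a⟩

/-- The difference frame `(ω, ≠)`. -/
def omegaNeq : Frame1 := ⟨ℕ, ⟨0⟩, fun a b => a ≠ b⟩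

/-- The frame `(ω, <)`. -/
def omegaLt : Frame1 := ⟨ℕ, ⟨0⟩, fun a b => a < b⟩

/-- The frame `(ω, ≤)`. -/
def omegaLe : Frame1 := ⟨ℕ, ⟨0⟩, fun a b => a ≤ b⟩

/-- The frame `(ℚ, <)`. -/
def ratLt : Frame1 := ⟨ℚ, ⟨0⟩, fun a b => a < b⟩

/-- A unimodal frame is one-step rooted if some point sees every other point in one step. -/
def OneStepRooted (F : Frame1) : Prop := ∃ r : F.W, ∀ w : F.W, w ≠ r → F.R r w

/-- `F` contains an `(ω + 1, >)`-type chain: there are distinct points `x n` for `n ≤ ω`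
such that for `n ≠ m`, `x n` is related to `x m` iff `n > m`. -/
def ContainsOmegaSuccChain (F : Frame1) : Prop :=
  ∃ x : WithTop ℕ → F.W, Function.Injective x ∧
    ∀ n m : WithTop ℕ, n ≠ m → (F.R (x n) (x m) ↔ m < n)

/-- (lcom) for a 2-frame. -/
def Lcom (F : Frame2) : Prop :=
  ∀ x y z : F.W, F.R 0 x y → F.R 1 y z → ∃ u, F.R 1 x u ∧ F.R 0 u z

/-- (rcom) for a 2-frame. -/
def Rcom (F : Frame2) : Prop :=
  ∀ x y z : F.W, F.R 1 x y → F.R 0 y z → ∃ u, F.R 0 x u ∧ F.R 1 u z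

/-- (conf) for a 2-frame. -/
def Conf (F : Frame2) : Prop :=
  ∀ x y z : F.W, F.R 1 x y → F.R 0 x z → ∃ u, F.R 0 y u ∧ F.R 1 z u

/-! ### The formula `ψ∞` -/

/-- The propositional variable `p`. -/
def pV : BForm := .var 0

/-- The propositional variable `q`. -/
def qV : BForm := .var 1

/-- `□1⁺ψ = ψ ∧ □1ψ`. -/
def boxPlus1 (ψ : BForm) : BForm := .and ψ (.box 1 ψ)

/-- The formula `ψ∞`: the conjunction of
`◇0(p ∧ ¬q ∧ □0¬q ∧ □1¬q)`,
`□1⁺◇0(q ∧ □1¬q)`,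
`□1⁺□0(q → ◇1(p ∧ ¬q ∧ □0¬q ∧ ◇1 q))`, and
`□1⁺□0□0(p → □0¬p)`. -/
def psiInf : BForm :=
  .and (.dia 0 (.and pV (.and (.neg qV) (.and (.box 0 (.neg qV)) (.box 1 (.neg qV))))))
    (.and (boxPlus1 (.dia 0 (.and qV (.box 1 (.neg qV)))))
      (.and (boxPlus1 (.box 0 (.imp qV
          (.dia 1 (.and pV (.and (.neg qV) (.and (.box 0 (.neg qV)) (.dia 1 qV))))))))
        (boxPlus1 (.box 0 (.box 0 (.imp pV (.box 0 (.neg pV))))))))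


/-!
Start from a point `b` with `q ∧ □1¬q` that is `R₀`-seen from the `□1⁺`-cone of `w`. Conjunct (3)
gives a `p`-point `c` with `b R₁ c R₁ b` (pseudo-transitivity and `□1¬q` at `b`); (lcom) brings
`c` below a point `y` of the cone, and (2), weak connectedness and (4) give a new such point `b'`
with `b' R₀ c` and `c ⊨ □0¬p`. Iterating yields `b 0, b 1, …` and `c 0, c 1, …`. By weak
connectedness `c n` is the only point of `p ∧ □0¬p` seen from `b (n + 1)`, and by
pseudo-transitivity `b n` is the only `q`-point `R₁ R₁`-seen from `b n`; so `b (n + 1) = b (m + 1)`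
forces `b n = b m`, while the witness `a` of (1) separates `b 0` from all later points.
-/

section Semantics

variable {F : Frame2} {V : ℕ → F.W → Prop} {w : F.W}

@[simp]
theorem bTruth_neg (φ : BForm) : BTruth F V w φ.neg ↔ ¬ BTruth F V w φ := Iff.rfl

@[simp]
theorem bTruth_and (φ ψ : BForm) :
    BTruth F V w (φ.and ψ) ↔ BTruth F V w φ ∧ BTruth F V w ψ := by
  simp only [BForm.and, bTruth_neg, BTruth]
  tauto

@[simp]
theorem bTruth_dia (i : Fin 2) (φ : BForm) :
    BTruth F V w (φ.dia i) ↔ ∃ v, F.R i w v ∧ BTruth F V v φ := by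
  simp [BForm.dia, BTruth]

end Semantics

open Relation

section Relations

variable {W : Type*} {R : W → W → Prop} {φ : W → Prop}

/-- `x ⊨ □¬φ` with respect to `R`. -/
def BoxNot (R : W → W → Prop) (φ : W → Prop) (x : W) : Prop := ∀ v, R x v → ¬ φ v

theorem forall_reflGen_of {A : W → Prop} {w : W} (hw : A w) (hR : ∀ v, R w v → A v) :
    ∀ x, ReflGen R w x → A x := by
  rintro x (_ | ⟨hx⟩)
  exacts [hw, hR x hx]

theorem PseudoTransitive.reflGen_trans (hR : PseudoTransitive R) {w x y : W}
    (hx : ReflGen R w x) (hxy : R x y) : ReflGen R w y := by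
  rcases hx with _ | ⟨hwx⟩
  · exact .single hxy
  · rcases hR w x y hwx hxy with rfl | hwy
    exacts [.refl, .single hwy]

theorem PseudoTransitive.eq_of_boxNot (hR : PseudoTransitive R) {b c b' : W}
    (hbc : R b c) (hcb' : R c b') (hb' : φ b') (hb : BoxNot R φ b) : b = b' :=
  (hR b c b' hbc hcb').resolve_right fun hbb' => hb b' hbb' hb'

theorem WeaklyConnected.rel_of_boxNot (hR : WeaklyConnected R) {x b c : W}
    (hxb : R x b) (hxc : R x c) (hb : φ b) (hc : ¬ φ c) (hc' : BoxNot R φ c) : R b c := by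
  rcases hR x b c hxb hxc with rfl | hbc | hcb
  exacts [absurd hb hc, hbc, absurd hb (hc' b hcb)]

theorem WeaklyConnected.eq_of_boxNot (hR : WeaklyConnected R) {x c c' : W}
    (hxc : R x c) (hxc' : R x c') (hc : φ c) (hc' : φ c')
    (hcb : BoxNot R φ c) (hcb' : BoxNot R φ c') : c = c' := by
  rcases hR x c c' hxc hxc' with h | h | h
  exacts [h, absurd hc' (hcb c' h), absurd hc (hcb' c h)]

end Relations

theorem Function.injective_of_succ {α : Type*} {f : ℕ → α} (h0 : ∀ m, f 0 ≠ f (m + 1))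
    (hsucc : ∀ n m, f (n + 1) = f (m + 1) → f n = f m) : Function.Injective f := by
  intro n
  induction n with
  | zero => rintro (_ | m) h; exacts [rfl, absurd h (h0 m)]
  | succ n ih =>
    rintro (_ | m) h
    exacts [absurd h.symm (h0 n), congrArg (· + 1) (ih (hsucc n m h))]

section PsiInf

variable {W : Type*} {R₀ R₁ : W → W → Prop} {p q : W → Prop} {w : W}

/-- The standard translation of `ψ∞` at `w`; `□1⁺` ranges over the `ReflGen R₁`-successors of
`w`. -/
structure PsiInfHolds (R₀ R₁ : W → W → Prop) (p q : W → Prop) (w : W) : Prop where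
  start : ∃ a, R₀ w a ∧ p a ∧ ¬ q a ∧ BoxNot R₀ q a ∧ BoxNot R₁ q a
  exists_q : ∀ x, ReflGen R₁ w x → ∃ b, R₀ x b ∧ q b ∧ BoxNot R₁ q b
  exists_p : ∀ x, ReflGen R₁ w x → ∀ y, R₀ x y → q y →
    ∃ z, R₁ y z ∧ p z ∧ ¬ q z ∧ BoxNot R₀ q z ∧ ∃ u, R₁ z u ∧ q u
  boxNot_p : ∀ x, ReflGen R₁ w x → ∀ y, R₀ x y → ∀ z, R₀ y z → p z → BoxNot R₀ p z

theorem psiInfHolds_of_bTruth {F : Frame2} {V : ℕ → F.W → Prop} {w : F.W}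
    (h : BTruth F V w psiInf) : PsiInfHolds (F.R 0) (F.R 1) (V 0) (V 1) w := by
  simp only [psiInf, boxPlus1, pV, qV, bTruth_and, bTruth_dia, bTruth_neg, BTruth] at h
  obtain ⟨h1, ⟨h2w, h2⟩, ⟨h3w, h3⟩, h4w, h4⟩ := h
  exact ⟨h1, forall_reflGen_of h2w h2, forall_reflGen_of h3w h3, forall_reflGen_of h4w h4⟩

def IsQPoint (R₀ R₁ : W → W → Prop) (q : W → Prop) (w b : W) : Prop :=
  (∃ x, ReflGen R₁ w x ∧ R₀ x b) ∧ q b ∧ BoxNot R₁ q b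

namespace PsiInfHolds

theorem exists_next (H : PsiInfHolds R₀ R₁ p q w) (hwc : WeaklyConnected R₀)
    (hpt : PseudoTransitive R₁) (hl : ∀ x y z, R₀ x y → R₁ y z → ∃ u, R₁ x u ∧ R₀ u z)
    {b : W} (hb : IsQPoint R₀ R₁ q w b) :
    ∃ c b', R₁ b c ∧ R₁ c b ∧ p c ∧ BoxNot R₀ p c ∧ R₀ b' c ∧ IsQPoint R₀ R₁ q w b' := by
  obtain ⟨⟨x, hx, hxb⟩, hqb, hb⟩ := hb
  obtain ⟨c, hbc, hpc, hqc, hc, u, hcu, hqu⟩ := H.exists_p x hx b hxb hqb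
  obtain rfl : b = u := hpt.eq_of_boxNot hbc hcu hqu hb
  obtain ⟨y, hxy, hyc⟩ := hl x b c hxb hbc
  have hy : ReflGen R₁ w y := hpt.reflGen_trans hx hxy
  obtain ⟨b', hyb', hqb', hb'⟩ := H.exists_q y hy
  have hb'c : R₀ b' c := hwc.rel_of_boxNot hyb' hyc hqb' hqc hc
  exact ⟨c, b', hbc, hcu, hpc, H.boxNot_p y hy b' hyb' c hb'c hpc, hb'c, ⟨y, hy, hyb'⟩, hqb', hb'⟩

theorem infinite (H : PsiInfHolds R₀ R₁ p q w) (hwc : WeaklyConnected R₀)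
    (hpt : PseudoTransitive R₁) (hl : ∀ x y z, R₀ x y → R₁ y z → ∃ u, R₁ x u ∧ R₀ u z) :
    Infinite W := by
  obtain ⟨a, hwa, hpa, hqa, ha₀, ha₁⟩ := H.start
  obtain ⟨b₀, hwb₀, hqb₀, hb₀⟩ := H.exists_q w .refl
  have hb₀a : R₀ b₀ a := hwc.rel_of_boxNot hwb₀ hwa hqb₀ hqa ha₀
  have ha : BoxNot R₀ p a := H.boxNot_p w .refl b₀ hwb₀ a hb₀a hpa
  choose! c next hbc hcb hpc hc hnext hq using fun b => H.exists_next hwc hpt hl (b := b)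
  set b : ℕ → W := fun n => next^[n] b₀
  have hb : ∀ n, IsQPoint R₀ R₁ q w (b n) := by
    intro n
    induction n with
    | zero => exact ⟨⟨w, .refl, hwb₀⟩, hqb₀, hb₀⟩
    | succ n ih => simpa only [b, Function.iterate_succ_apply'] using hq _ ih
  have hb_succ (n : ℕ) : R₀ (b (n + 1)) (c (b n)) := by
    simpa only [b, Function.iterate_succ_apply'] using hnext _ (hb n)
  refine Infinite.of_injective b (Function.injective_of_succ (fun m h0 => ?_) fun n m h => ?_)
  · -- `a` plays the role of the point `c` preceding `b 0`
    have hb₀c : R₀ (b 0) (c (b m)) := h0 ▸ hb_succ m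
    have hac : a = c (b m) := hwc.eq_of_boxNot hb₀a hb₀c hpa (hpc _ (hb m)) ha (hc _ (hb m))
    exact ha₁ (b m) (hac ▸ hcb _ (hb m)) (hb m).2.1
  · have hcc : c (b n) = c (b m) :=
      hwc.eq_of_boxNot (hb_succ n) (h ▸ hb_succ m) (hpc _ (hb n)) (hpc _ (hb m))
        (hc _ (hb n)) (hc _ (hb m))
    exact hpt.eq_of_boxNot (hbc _ (hb n)) (hcc ▸ hcb _ (hb m)) (hb m).2.1 (hb n).2.2

end PsiInfHolds

end PsiInf

/-- **Lemma 5.** If the 2-frame `F` has weakly connected `R0`, pseudo-transitive `R1`,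
and `R0, R1` left-commute, then satisfiability of `ψ∞` in `F` forces `F` to be
infinite. -/
theorem infinite_of_psiInf_sat (F : Frame2)
    (hwc : WeaklyConnected (F.R 0)) (hpt : PseudoTransitive (F.R 1))
    (hl : Lcom F)
    (V : ℕ → F.W → Prop) (w : F.W) (h : BTruth F V w psiInf) :
    Infinite F.W :=
  (psiInfHolds_of_bTruth h).infinite hwc hpt hl
end

section
/- Let F be the 2-frame (W, ≤, W×W) where W = {x,y} with x ≠ y and ≤ = {(x,x),(x,y),(y,y)}. Then F is a p-morphic image of the product 2-frame (ω,≤) × (ω, ω×ω), i.e., there is a p-morphism from (ω,≤) × (ω, ω×ω) onto F. -/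
set_option linter.unusedVariables false

/-! ### p-morphisms -/

/-- A p-morphism from the 2-frame `F` onto the 2-frame `G`: a surjective map satisfying
the forth and back conditions for both relations. -/
def PMorphism (F G : Frame2) (f : F.W → G.W) : Prop :=
  Function.Surjective f ∧
  ∀ i : Fin 2,
    (∀ x y, F.R i x y → G.R i (f x) (f y)) ∧
    (∀ x v, G.R i (f x) v → ∃ y, F.R i x y ∧ f y = v)

/-- The frame `(ω, ω × ω)`: the natural numbers with the universal relation. -/
def omegaUniv : Frame1 := ⟨ℕ, ⟨0⟩, fun _ _ => True⟩

/-- The 2-frame `(W, ≤, W × W)` where `W = {x, y}` and `≤ = {(x,x), (x,y), (y,y)}`. -/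
def twoChainFrame (W : Type) (x y : W) : Frame2 :=
  ⟨W, ⟨x⟩, fun i a b =>
    if i = 0 then ((a = x ∧ b = x) ∨ (a = x ∧ b = y) ∨ (a = y ∧ b = y)) else True⟩

/- The point `(n, m)` is sent to `x` if `n < m` and to `y` otherwise. Moving along `≤` in the
first coordinate can only destroy `n < m`, and from `n < m` the point `(m, m)` reaches `y`;
moving freely in the second coordinate reaches both values from every point. -/

theorem prodFrame_R_one (F0 F1 : Frame1) (a b : F0.W × F1.W) :
    (prodFrame F0 F1).R 1 a b ↔ F1.R a.2 b.2 ∧ a.1 = b.1 :=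
  Iff.rfl

theorem twoChainFrame_R_zero {W : Type} (x y a b : W) :
    (twoChainFrame W x y).R 0 a b ↔ (a = x ∧ b = x) ∨ (a = x ∧ b = y) ∨ (a = y ∧ b = y) :=
  Iff.rfl

theorem twoChainFrame_R_one {W : Type} (x y a b : W) : (twoChainFrame W x y).R 1 a b :=
  trivial

theorem twoChainFrame_eq_y_of_R_zero_y {W : Type} {x y v : W}
    (h : (twoChainFrame W x y).R 0 y v) : v = y := by
  rw [twoChainFrame_R_zero] at h
  rcases h with ⟨hyx, rfl⟩ | ⟨-, rfl⟩ | ⟨-, rfl⟩ <;> first | rfl | exact hyx.symm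

theorem prodFrame_back_one_of_surjective_fibres {F0 F1 : Frame1} (hF1 : ∀ a b, F1.R a b)
    {G : Frame2} {f : F0.W × F1.W → G.W} (hf : ∀ u, Function.Surjective fun v => f (u, v))
    (p : F0.W × F1.W) (w : G.W) : ∃ q, (prodFrame F0 F1).R 1 p q ∧ f q = w := by
  obtain ⟨v, hv⟩ := hf p.1 w
  exact ⟨(p.1, v), (prodFrame_R_one F0 F1 _ _).2 ⟨hF1 _ _, rfl⟩, hv⟩

def ltSplit {W : Type} (x y : W) (p : ℕ × ℕ) : W :=
  if p.1 < p.2 then x else y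

section ltSplit

variable {W : Type} {x y : W}

theorem ltSplit_surjective_fibre (hW : ∀ w : W, w = x ∨ w = y) (n : ℕ) :
    Function.Surjective fun m => ltSplit x y (n, m) := by
  intro w
  rcases hW w with rfl | rfl
  · exact ⟨n + 1, if_pos n.lt_succ_self⟩
  · exact ⟨n, if_neg n.lt_irrefl⟩

theorem ltSplit_forth_zero {n n' : ℕ} (m : ℕ) (hle : n ≤ n') :
    (twoChainFrame W x y).R 0 (ltSplit x y (n, m)) (ltSplit x y (n', m)) := by
  refine (twoChainFrame_R_zero x y _ _).2 ?_
  by_cases h : n < m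
  · by_cases h' : n' < m
    · exact Or.inl ⟨if_pos h, if_pos h'⟩
    · exact Or.inr (Or.inl ⟨if_pos h, if_neg h'⟩)
  · have h' : ¬n' < m := fun h' => h (hle.trans_lt h')
    exact Or.inr (Or.inr ⟨if_neg h, if_neg h'⟩)

theorem ltSplit_back_zero (hW : ∀ w : W, w = x ∨ w = y) (p : ℕ × ℕ) (v : W)
    (h : (twoChainFrame W x y).R 0 (ltSplit x y p) v) :
    ∃ q, (prodFrame omegaLe omegaUniv).R 0 p q ∧ ltSplit x y q = v := by
  obtain ⟨n, m⟩ := p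
  by_cases hnm : n < m
  · rcases hW v with rfl | rfl
    · exact ⟨(n, m), ⟨le_rfl, rfl⟩, if_pos hnm⟩
    · exact ⟨(m, m), ⟨hnm.le, rfl⟩, if_neg m.lt_irrefl⟩
  · have hy : ltSplit x y (n, m) = y := if_neg hnm
    exact ⟨(n, m), ⟨le_rfl, rfl⟩, hy.trans (twoChainFrame_eq_y_of_R_zero_y (hy ▸ h)).symm⟩

theorem ltSplit_pmorphism (hW : ∀ w : W, w = x ∨ w = y) :
    PMorphism (prodFrame omegaLe omegaUniv) (twoChainFrame W x y) (ltSplit x y) := by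
  refine ⟨fun w => ?_, Fin.forall_fin_two.2 ?_⟩
  · obtain ⟨m, hm⟩ := ltSplit_surjective_fibre hW 0 w
    exact ⟨((0 : ℕ), m), hm⟩
  refine ⟨⟨?_, ltSplit_back_zero hW⟩, fun _ _ _ => twoChainFrame_R_one x y _ _,
    fun p w _ => prodFrame_back_one_of_surjective_fibres (F0 := omegaLe) (F1 := omegaUniv)
      (fun _ _ => trivial) (ltSplit_surjective_fibre hW) p w⟩
  rintro ⟨n, m⟩ ⟨n', _⟩ ⟨hle, rfl⟩
  exact ltSplit_forth_zero m hle

end ltSplit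

theorem twoChainFrame_pmorphic_image_general (W : Type) (x y : W)
    (hW : ∀ w : W, w = x ∨ w = y) :
    ∃ f : (prodFrame omegaLe omegaUniv).W → (twoChainFrame W x y).W,
      PMorphism (prodFrame omegaLe omegaUniv) (twoChainFrame W x y) f :=
  ⟨ltSplit x y, ltSplit_pmorphism hW⟩

/-- The 2-frame `(W, ≤, W × W)` with `W = {x, y}` and `≤ = {(x,x), (x,y), (y,y)}` is a
p-morphic image of the product frame `(ω, ≤) × (ω, ω × ω)`. -/
theorem twoChainFrame_pmorphic_image (W : Type) (x y : W) (hxy : x ≠ y)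
    (hW : ∀ w : W, w = x ∨ w = y) :
    ∃ f : (prodFrame omegaLe omegaUniv).W → (twoChainFrame W x y).W,
      PMorphism (prodFrame omegaLe omegaUniv) (twoChainFrame W x y) f :=
  twoChainFrame_pmorphic_image_general W x y hW
end

section
/- Let F be the 2-frame (W, ≤, W×W) where W = {x,y} with x ≠ y and ≤ = {(x,x),(x,y),(y,y)}. Then F is not a p-morphic image of any finite product 2-frame, i.e., there is no p-morphism onto F from any product F0 × F1 of finite unimodal frames F0 and F1. -/
set_option linter.unusedVariables false

/-! Let `f` be a p-morphism from `F0 × F1` onto the frame. As `y` sees only itself along `R0`,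
the points of a column `F0 × {b}` sent to `y` form an `R0`-up-set. From a point `(a, b) ↦ x`,
the back conditions along `x R0 y` and `y R1 x` give `a R0 a'` with `(a', b) ↦ y` and some
`(a', b') ↦ x`. Iterating yields `a₀ R0 a₁ R0 a₂ …` with `(aₙ, bₘ) ↦ y` for `m < n` while
`(aₘ, bₘ) ↦ x`, so the `aₙ` are pairwise distinct and `F0` is infinite. -/

theorem infinite_of_forall_exists_step {A B : Type*} (R : A → A → Prop) (X Y : A → B → Prop)
    (hXY : ∀ a b, X a b → ¬ Y a b) (hY : ∀ a a' b, Y a b → R a a' → Y a' b)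
    (hstep : ∀ a b, X a b → ∃ a' b', R a a' ∧ Y a' b ∧ X a' b') (hX : ∃ a b, X a b) :
    Infinite A := by
  obtain ⟨a₀, b₀, h₀⟩ := hX
  have hstep' : ∀ p : {p : A × B // X p.1 p.2},
      ∃ q : {p : A × B // X p.1 p.2}, R p.1.1 q.1.1 ∧ Y q.1.1 p.1.2 := fun ⟨(a, b), h⟩ =>
    let ⟨a', b', hR, hY', hX'⟩ := hstep a b h; ⟨⟨(a', b'), hX'⟩, hR, hY'⟩
  choose s hsR hsY using hstep'
  set g : ℕ → {p : A × B // X p.1 p.2} := fun n => s^[n] ⟨(a₀, b₀), h₀⟩ with hg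
  have hgY : ∀ m n, m < n → Y (g n).1.1 (g m).1.2 := by
    intro m n hmn
    induction n, hmn using Nat.le_induction with
    | base => simpa only [hg, Function.iterate_succ_apply'] using hsY (g m)
    | succ n _ ih =>
      simp only [hg, Function.iterate_succ_apply'] at ih ⊢
      exact hY _ _ _ ih (hsR _)
  refine Infinite.of_injective (fun n => (g n).1.1) fun m n hmn => ?_
  replace hmn : (g m).1.1 = (g n).1.1 := hmn
  by_contra hne
  rcases lt_or_gt_of_ne hne with h | h
  · exact hXY _ _ (g m).2 (by rw [hmn]; exact hgY m n h)
  · exact hXY _ _ (g n).2 (by rw [← hmn]; exact hgY n m h)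

section PMorphism

variable {F0 F1 : Frame1} {G : Frame2} {f : (prodFrame F0 F1).W → G.W} {x y : G.W}

theorem PMorphism.map_eq_of_R_fst (hf : PMorphism (prodFrame F0 F1) G f)
    (hy : ∀ v, G.R 0 y v → v = y) {a a' : F0.W} {b : F1.W} (h : f (a, b) = y)
    (ha : F0.R a a') : f (a', b) = y :=
  hy _ (h ▸ (hf.2 0).1 (a, b) (a', b) ⟨ha, rfl⟩)

theorem PMorphism.exists_step (hf : PMorphism (prodFrame F0 F1) G f) (hxy : G.R 0 x y)
    (hyx : G.R 1 y x) {a : F0.W} {b : F1.W} (h : f (a, b) = x) :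
    ∃ a' b', F0.R a a' ∧ f (a', b) = y ∧ f (a', b') = x := by
  obtain ⟨⟨a', _⟩, ⟨ha, rfl⟩, hy⟩ := (hf.2 0).2 (a, b) y (h ▸ hxy)
  obtain ⟨⟨_, b'⟩, ⟨-, rfl⟩, hx⟩ := (hf.2 1).2 (a', b) x (hy ▸ hyx)
  exact ⟨a', b', ha, hy, hx⟩

theorem PMorphism.infinite_fst (hf : PMorphism (prodFrame F0 F1) G f) (hne : x ≠ y)
    (hxy : G.R 0 x y) (hyx : G.R 1 y x) (hy : ∀ v, G.R 0 y v → v = y) : Infinite F0.W :=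
  infinite_of_forall_exists_step F0.R (fun a b => f (a, b) = x) (fun a b => f (a, b) = y)
    (fun _ _ hx hy => hne (hx.symm.trans hy)) (fun _ _ _ h ha => hf.map_eq_of_R_fst hy h ha)
    (fun _ _ h => hf.exists_step hxy hyx h) (let ⟨p, hp⟩ := hf.1 x; ⟨p.1, p.2, hp⟩)

end PMorphism

theorem twoChainFrame_not_finite_pmorphic_image_general (W : Type) (x y : W) (hxy : x ≠ y) :
    ∀ (F0 F1 : Frame1), Finite F0.W → Finite F1.W →
      ∀ f : (prodFrame F0 F1).W → (twoChainFrame W x y).W,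
        ¬ PMorphism (prodFrame F0 F1) (twoChainFrame W x y) f := by
  intro F0 F1 _ _ f hf
  have hy : ∀ v, (twoChainFrame W x y).R 0 y v → v = y := by
    simp [twoChainFrame, hxy.symm]
  have := hf.infinite_fst hxy (by simp [twoChainFrame]) trivial hy
  exact not_finite F0.W

/-- The 2-frame `(W, ≤, W × W)` with `W = {x, y}` and `≤ = {(x,x), (x,y), (y,y)}` is not
a p-morphic image of any product of two finite unimodal frames. -/
theorem twoChainFrame_not_finite_pmorphic_image (W : Type) (x y : W) (hxy : x ≠ y)
    (hW : ∀ w : W, w = x ∨ w = y) :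
    ∀ (F0 F1 : Frame1), Finite F0.W → Finite F1.W →
      ∀ f : (prodFrame F0 F1).W → (twoChainFrame W x y).W,
        ¬ PMorphism (prodFrame F0 F1) (twoChainFrame W x y) f :=
  twoChainFrame_not_finite_pmorphic_image_general W x y hxy
end
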